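/- The sum of groves of planar trees is associative, (A + B) + C = A + (B + C) for all groves A, B, C, the grove {|} is a two-sided neutral element, and if A is a grove of degree n and B a grove of degree m then A + B is a grove of degree n + m. -/
import Mathlib


/-- A planar tree: a leaf `|` or a grafting `x⁰ ∨ x¹ ∨ ⋯ ∨ x^k` (`k ≥ 1`) of at
least two planar trees attached to a new root.  The children of
`node first middle last` are `first :: middle ++ [last]`. -/
inductive PT : Type
  | leaf : PT
  | node : PT → List PT → PT → PT

namespace PT

mutual
/-- Number of leaves of a planar tree. -/
def nleaves : PT → ℕ
  | leaf => 1
  | node f m l => nleaves f + nleavesList m + nleaves l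

def nleavesList : List PT → ℕ
  | [] => 0
  | t :: ts => nleaves t + nleavesList ts
end

/-- The degree of a planar tree: its number of leaves minus 1. -/
def deg (t : PT) : ℕ := nleaves t - 1

/-- The set `T n` of planar trees of degree `n`. -/
def T (n : ℕ) : Set PT := {t | t.deg = n}

mutual
/-- Number of internal vertices (grafting nodes) of a planar tree. -/
def nint : PT → ℕ
  | leaf => 0
  | node f m l => nint f + nintList m + nint l + 1

def nintList : List PT → ℕ
  | [] => 0
  | t :: ts => nint t + nintList ts
end

/-- The sum of two planar trees:
`| + y = {y}`, `x + | = {x}` and, for `x = x⁰ ∨ ⋯ ∨ x^k` and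
`y = y⁰ ∨ ⋯ ∨ y^ℓ`, `x + y = (x ⊣ y) ∪ (x ⊥ y) ∪ (x ⊢ y)` where
`x ⊣ y = {x⁰ ∨ ⋯ ∨ x^{k-1} ∨ z : z ∈ x^k + y}`,
`x ⊥ y = {x⁰ ∨ ⋯ ∨ x^{k-1} ∨ z ∨ y¹ ∨ ⋯ ∨ y^ℓ : z ∈ x^k + y⁰}` and
`x ⊢ y = {z ∨ y¹ ∨ ⋯ ∨ y^ℓ : z ∈ x + y⁰}`. -/
def psum : PT → PT → Set PT
  | leaf, y => {y}
  | node xf xm xl, leaf => {node xf xm xl}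
  | node xf xm xl, node yf ym yl =>
      ((fun z => node xf xm z) '' psum xl (node yf ym yl)) ∪
      ((fun z => node xf (xm ++ z :: ym) yl) '' psum xl yf) ∪
      ((fun z => node z ym yl) '' psum (node xf xm xl) yf)
  termination_by x y => sizeOf x + sizeOf y
  decreasing_by all_goals (simp_wf <;> omega)

/-- The left sum `x ⊣ y` of planar trees. -/
def pld : PT → PT → Set PT
  | x, leaf => {x}
  | leaf, _ => {leaf}
  | node xf xm xl, y => (fun z => node xf xm z) '' psum xl y

/-- The middle sum `x ⊥ y` of planar trees. -/
def pmd : PT → PT → Set PT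
  | _, leaf => {leaf}
  | leaf, _ => {leaf}
  | node xf xm xl, node yf ym yl => (fun z => node xf (xm ++ z :: ym) yl) '' psum xl yf

/-- The right sum `x ⊢ y` of planar trees. -/
def prd : PT → PT → Set PT
  | leaf, y => {y}
  | _, leaf => {leaf}
  | x, node yf ym yl => (fun z => node z ym yl) '' psum x yf

/-- A grove of degree `n`: a nonempty subset of `T n`. -/
def Grove (n : ℕ) (A : Set PT) : Prop := A.Nonempty ∧ ∀ x ∈ A, x.deg = n

/-- Sum of groves. -/
def pgsum (A B : Set PT) : Set PT := ⋃ x ∈ A, ⋃ y ∈ B, psum x y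

/-- Left sum of groves. -/
def pgl (A B : Set PT) : Set PT := ⋃ x ∈ A, ⋃ y ∈ B, pld x y

/-- Middle sum of groves. -/
def pgm (A B : Set PT) : Set PT := ⋃ x ∈ A, ⋃ y ∈ B, pmd x y

/-- Right sum of groves. -/
def pgr (A B : Set PT) : Set PT := ⋃ x ∈ A, ⋃ y ∈ B, prd x y

open Set

theorem psum_leaf_left (y : PT) : psum leaf y = {y} := by simp [psum]

theorem psum_leaf_right (x : PT) : psum x leaf = {x} := by cases x <;> simp [psum]

theorem mem_psum_node_iff (xf yf : PT) (xm ym : List PT) (xl yl : PT) (t : PT) :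
    t ∈ psum (node xf xm xl) (node yf ym yl) ↔
      (∃ u ∈ psum xl (node yf ym yl), t = node xf xm u) ∨
      (∃ u ∈ psum xl yf, t = node xf (xm ++ u :: ym) yl) ∨
      (∃ u ∈ psum (node xf xm xl) yf, t = node u ym yl) := by
  simp only [psum, Set.mem_union, Set.mem_image]
  constructor
  · rintro ((⟨u, hu, rfl⟩ | ⟨u, hu, rfl⟩) | ⟨u, hu, rfl⟩)
    · exact Or.inl ⟨u, hu, rfl⟩
    · exact Or.inr (Or.inl ⟨u, hu, rfl⟩)
    · exact Or.inr (Or.inr ⟨u, hu, rfl⟩)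
  · rintro (⟨u, hu, rfl⟩ | ⟨u, hu, rfl⟩ | ⟨u, hu, rfl⟩)
    · exact Or.inl (Or.inl ⟨u, hu, rfl⟩)
    · exact Or.inl (Or.inr ⟨u, hu, rfl⟩)
    · exact Or.inr ⟨u, hu, rfl⟩

/-- Every member of a sum with a node on the left is a node. -/
theorem shapeL {a : PT} {m : List PT} {b y z : PT} (h : z ∈ psum (node a m b) y) :
    ∃ p q r, z = node p q r := by
  cases y with
  | leaf => rw [psum_leaf_right] at h; exact ⟨a, m, b, h⟩
  | node yf ym yl =>
      rw [mem_psum_node_iff] at h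
      rcases h with ⟨u, _, rfl⟩ | ⟨u, _, rfl⟩ | ⟨u, _, rfl⟩ <;> exact ⟨_, _, _, rfl⟩

/-- Every member of a sum with a node on the right is a node. -/
theorem shapeR {a : PT} {m : List PT} {b x z : PT} (h : z ∈ psum x (node a m b)) :
    ∃ p q r, z = node p q r := by
  cases x with
  | leaf => rw [psum_leaf_left] at h; exact ⟨a, m, b, h⟩
  | node xf xm xl =>
      rw [mem_psum_node_iff] at h
      rcases h with ⟨u, _, rfl⟩ | ⟨u, _, rfl⟩ | ⟨u, _, rfl⟩ <;> exact ⟨_, _, _, rfl⟩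

theorem mem_biUnion_iff {α β : Type*} {S : Set α} {f : α → Set β} {w : β} :
    w ∈ (⋃ z ∈ S, f z) ↔ ∃ z, z ∈ S ∧ w ∈ f z := by simp

/-- Associativity of the sum of planar trees, in grove form. -/
theorem psum_assoc : ∀ (x y c : PT),
    (⋃ z ∈ psum x y, psum z c) = ⋃ z ∈ psum y c, psum x z
  | leaf, y, c => by
      simp [psum_leaf_left, Set.biUnion_singleton, Set.biUnion_of_singleton]
  | node xf xm xl, leaf, c => by
      simp [psum_leaf_left, psum_leaf_right, Set.biUnion_singleton]
  | node xf xm xl, node yf ym yl, leaf => by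
      simp [psum_leaf_right, Set.biUnion_singleton, Set.biUnion_of_singleton]
  | node xf xm xl, node yf ym yl, node cf cm cl => by
      have IH1 := psum_assoc xl (node yf ym yl) (node cf cm cl)
      have IH2 := psum_assoc xl (node yf ym yl) cf
      have IH3 := psum_assoc (node xf xm xl) (node yf ym yl) cf
      have M1 : ∀ w : PT,
          (∃ u, u ∈ psum xl (node yf ym yl) ∧ w ∈ psum u (node cf cm cl)) ↔
          (∃ v, v ∈ psum (node yf ym yl) (node cf cm cl) ∧ w ∈ psum xl v) := by
        intro w; rw [← mem_biUnion_iff, ← mem_biUnion_iff, IH1]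
      have M2 : ∀ w : PT,
          (∃ u, u ∈ psum xl (node yf ym yl) ∧ w ∈ psum u cf) ↔
          (∃ v, v ∈ psum (node yf ym yl) cf ∧ w ∈ psum xl v) := by
        intro w; rw [← mem_biUnion_iff, ← mem_biUnion_iff, IH2]
      have M3 : ∀ w : PT,
          (∃ u, u ∈ psum (node xf xm xl) (node yf ym yl) ∧ w ∈ psum u cf) ↔
          (∃ v, v ∈ psum (node yf ym yl) cf ∧ w ∈ psum (node xf xm xl) v) := by
        intro w; rw [← mem_biUnion_iff, ← mem_biUnion_iff, IH3]
      ext t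
      rw [mem_biUnion_iff, mem_biUnion_iff]
      constructor
      · rintro ⟨z, hz, ht⟩
        rw [mem_psum_node_iff] at hz
        rcases hz with ⟨u, hu, rfl⟩ | ⟨u, hu, rfl⟩ | ⟨u, hu, rfl⟩
        · -- z = node xf xm u, u ∈ xl + Y
          rw [mem_psum_node_iff] at ht
          rcases ht with ⟨w, hw, rfl⟩ | ⟨w, hw, rfl⟩ | ⟨w, hw, rfl⟩
          · obtain ⟨v, hv, hwv⟩ := (M1 w).mp ⟨u, hu, hw⟩
            obtain ⟨p, q, r, rfl⟩ := shapeL hv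
            exact ⟨node p q r, hv, (mem_psum_node_iff _ _ _ _ _ _ _).mpr
              (Or.inl ⟨w, hwv, rfl⟩)⟩
          · obtain ⟨v, hv, hwv⟩ := (M2 w).mp ⟨u, hu, hw⟩
            exact ⟨node v cm cl,
              (mem_psum_node_iff _ _ _ _ _ _ _).mpr (Or.inr (Or.inr ⟨v, hv, rfl⟩)),
              (mem_psum_node_iff _ _ _ _ _ _ _).mpr (Or.inr (Or.inl ⟨w, hwv, rfl⟩))⟩
          · obtain ⟨v, hv, hwv⟩ := (M3 w).mp
              ⟨node xf xm u, (mem_psum_node_iff _ _ _ _ _ _ _).mpr (Or.inl ⟨u, hu, rfl⟩), hw⟩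
            exact ⟨node v cm cl,
              (mem_psum_node_iff _ _ _ _ _ _ _).mpr (Or.inr (Or.inr ⟨v, hv, rfl⟩)),
              (mem_psum_node_iff _ _ _ _ _ _ _).mpr (Or.inr (Or.inr ⟨w, hwv, rfl⟩))⟩
        · -- z = node xf (xm ++ u :: ym) yl, u ∈ xl + yf
          rw [mem_psum_node_iff] at ht
          rcases ht with ⟨w, hw, rfl⟩ | ⟨w, hw, rfl⟩ | ⟨w, hw, rfl⟩
          · exact ⟨node yf ym w,
              (mem_psum_node_iff _ _ _ _ _ _ _).mpr (Or.inl ⟨w, hw, rfl⟩),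
              (mem_psum_node_iff _ _ _ _ _ _ _).mpr (Or.inr (Or.inl ⟨u, hu, rfl⟩))⟩
          · exact ⟨node yf (ym ++ w :: cm) cl,
              (mem_psum_node_iff _ _ _ _ _ _ _).mpr (Or.inr (Or.inl ⟨w, hw, rfl⟩)),
              (mem_psum_node_iff _ _ _ _ _ _ _).mpr (Or.inr (Or.inl ⟨u, hu, by simp⟩))⟩
          · obtain ⟨v, hv, hwv⟩ := (M3 w).mp
              ⟨node xf (xm ++ u :: ym) yl,
                (mem_psum_node_iff _ _ _ _ _ _ _).mpr (Or.inr (Or.inl ⟨u, hu, rfl⟩)), hw⟩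
            exact ⟨node v cm cl,
              (mem_psum_node_iff _ _ _ _ _ _ _).mpr (Or.inr (Or.inr ⟨v, hv, rfl⟩)),
              (mem_psum_node_iff _ _ _ _ _ _ _).mpr (Or.inr (Or.inr ⟨w, hwv, rfl⟩))⟩
        · -- z = node u ym yl, u ∈ X + yf
          rw [mem_psum_node_iff] at ht
          rcases ht with ⟨w, hw, rfl⟩ | ⟨w, hw, rfl⟩ | ⟨w, hw, rfl⟩
          · exact ⟨node yf ym w,
              (mem_psum_node_iff _ _ _ _ _ _ _).mpr (Or.inl ⟨w, hw, rfl⟩),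
              (mem_psum_node_iff _ _ _ _ _ _ _).mpr (Or.inr (Or.inr ⟨u, hu, rfl⟩))⟩
          · exact ⟨node yf (ym ++ w :: cm) cl,
              (mem_psum_node_iff _ _ _ _ _ _ _).mpr (Or.inr (Or.inl ⟨w, hw, rfl⟩)),
              (mem_psum_node_iff _ _ _ _ _ _ _).mpr (Or.inr (Or.inr ⟨u, hu, rfl⟩))⟩
          · obtain ⟨v, hv, hwv⟩ := (M3 w).mp
              ⟨node u ym yl,
                (mem_psum_node_iff _ _ _ _ _ _ _).mpr (Or.inr (Or.inr ⟨u, hu, rfl⟩)), hw⟩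
            exact ⟨node v cm cl,
              (mem_psum_node_iff _ _ _ _ _ _ _).mpr (Or.inr (Or.inr ⟨v, hv, rfl⟩)),
              (mem_psum_node_iff _ _ _ _ _ _ _).mpr (Or.inr (Or.inr ⟨w, hwv, rfl⟩))⟩
      · rintro ⟨z, hz, ht⟩
        rw [mem_psum_node_iff] at hz
        rcases hz with ⟨v, hv, rfl⟩ | ⟨v, hv, rfl⟩ | ⟨v, hv, rfl⟩
        · -- z = node yf ym v, v ∈ yl + C
          rw [mem_psum_node_iff] at ht
          rcases ht with ⟨w, hw, rfl⟩ | ⟨w, hw, rfl⟩ | ⟨w, hw, rfl⟩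
          · obtain ⟨u, hu, hwu⟩ := (M1 w).mpr
              ⟨node yf ym v, (mem_psum_node_iff _ _ _ _ _ _ _).mpr (Or.inl ⟨v, hv, rfl⟩), hw⟩
            exact ⟨node xf xm u,
              (mem_psum_node_iff _ _ _ _ _ _ _).mpr (Or.inl ⟨u, hu, rfl⟩),
              (mem_psum_node_iff _ _ _ _ _ _ _).mpr (Or.inl ⟨w, hwu, rfl⟩)⟩
          · exact ⟨node xf (xm ++ w :: ym) yl,
              (mem_psum_node_iff _ _ _ _ _ _ _).mpr (Or.inr (Or.inl ⟨w, hw, rfl⟩)),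
              (mem_psum_node_iff _ _ _ _ _ _ _).mpr (Or.inl ⟨v, hv, rfl⟩)⟩
          · exact ⟨node w ym yl,
              (mem_psum_node_iff _ _ _ _ _ _ _).mpr (Or.inr (Or.inr ⟨w, hw, rfl⟩)),
              (mem_psum_node_iff _ _ _ _ _ _ _).mpr (Or.inl ⟨v, hv, rfl⟩)⟩
        · -- z = node yf (ym ++ v :: cm) cl, v ∈ yl + cf
          rw [mem_psum_node_iff] at ht
          rcases ht with ⟨w, hw, rfl⟩ | ⟨w, hw, rfl⟩ | ⟨w, hw, rfl⟩
          · obtain ⟨u, hu, hwu⟩ := (M1 w).mpr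
              ⟨node yf (ym ++ v :: cm) cl,
                (mem_psum_node_iff _ _ _ _ _ _ _).mpr (Or.inr (Or.inl ⟨v, hv, rfl⟩)), hw⟩
            exact ⟨node xf xm u,
              (mem_psum_node_iff _ _ _ _ _ _ _).mpr (Or.inl ⟨u, hu, rfl⟩),
              (mem_psum_node_iff _ _ _ _ _ _ _).mpr (Or.inl ⟨w, hwu, rfl⟩)⟩
          · exact ⟨node xf (xm ++ w :: ym) yl,
              (mem_psum_node_iff _ _ _ _ _ _ _).mpr (Or.inr (Or.inl ⟨w, hw, rfl⟩)),
              (mem_psum_node_iff _ _ _ _ _ _ _).mpr (Or.inr (Or.inl ⟨v, hv, by simp⟩))⟩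
          · exact ⟨node w ym yl,
              (mem_psum_node_iff _ _ _ _ _ _ _).mpr (Or.inr (Or.inr ⟨w, hw, rfl⟩)),
              (mem_psum_node_iff _ _ _ _ _ _ _).mpr (Or.inr (Or.inl ⟨v, hv, rfl⟩))⟩
        · -- z = node v cm cl, v ∈ Y + cf
          rw [mem_psum_node_iff] at ht
          rcases ht with ⟨w, hw, rfl⟩ | ⟨w, hw, rfl⟩ | ⟨w, hw, rfl⟩
          · obtain ⟨u, hu, hwu⟩ := (M1 w).mpr
              ⟨node v cm cl,
                (mem_psum_node_iff _ _ _ _ _ _ _).mpr (Or.inr (Or.inr ⟨v, hv, rfl⟩)), hw⟩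
            exact ⟨node xf xm u,
              (mem_psum_node_iff _ _ _ _ _ _ _).mpr (Or.inl ⟨u, hu, rfl⟩),
              (mem_psum_node_iff _ _ _ _ _ _ _).mpr (Or.inl ⟨w, hwu, rfl⟩)⟩
          · obtain ⟨u, hu, hwu⟩ := (M2 w).mpr ⟨v, hv, hw⟩
            exact ⟨node xf xm u,
              (mem_psum_node_iff _ _ _ _ _ _ _).mpr (Or.inl ⟨u, hu, rfl⟩),
              (mem_psum_node_iff _ _ _ _ _ _ _).mpr (Or.inr (Or.inl ⟨w, hwu, rfl⟩))⟩
          · obtain ⟨z0, hz0, hwz⟩ := (M3 w).mpr ⟨v, hv, hw⟩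
            obtain ⟨p, q, r, rfl⟩ := shapeL hz0
            exact ⟨node p q r, hz0,
              (mem_psum_node_iff _ _ _ _ _ _ _).mpr (Or.inr (Or.inr ⟨w, hwz, rfl⟩))⟩
  termination_by x y c => sizeOf x + sizeOf y + sizeOf c
  decreasing_by all_goals (simp_wf <;> omega)

theorem nleavesList_append (a b : List PT) :
    nleavesList (a ++ b) = nleavesList a + nleavesList b := by
  induction a with
  | nil => simp [nleavesList]
  | cons x xs ih => simp [nleavesList, ih, Nat.add_assoc]

theorem nleaves_pos : ∀ t : PT, 1 ≤ nleaves t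
  | leaf => le_refl 1
  | node f m l => by
      have := nleaves_pos f
      simp only [nleaves]; omega

theorem nleaves_psum : ∀ (x y z : PT), z ∈ psum x y →
    nleaves z + 1 = nleaves x + nleaves y
  | leaf, y, z, h => by
      rw [psum_leaf_left] at h
      rcases h with rfl; simp [nleaves]; omega
  | node xf xm xl, leaf, z, h => by
      rw [psum_leaf_right] at h
      rcases h with rfl; simp [nleaves]
  | node xf xm xl, node yf ym yl, z, h => by
      rw [mem_psum_node_iff] at h
      rcases h with ⟨u, hu, rfl⟩ | ⟨u, hu, rfl⟩ | ⟨u, hu, rfl⟩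
      · have := nleaves_psum xl (node yf ym yl) u hu
        simp only [nleaves] at *; omega
      · have := nleaves_psum xl yf u hu
        simp only [nleaves, nleavesList_append, nleavesList] at *; omega
      · have := nleaves_psum (node xf xm xl) yf u hu
        simp only [nleaves] at *; omega
  termination_by x y => sizeOf x + sizeOf y
  decreasing_by all_goals (simp_wf <;> omega)

theorem psum_nonempty : ∀ x y : PT, (psum x y).Nonempty
  | leaf, y => ⟨y, by rw [psum_leaf_left]; rfl⟩
  | node xf xm xl, leaf => ⟨node xf xm xl, by rw [psum_leaf_right]; rfl⟩
  | node xf xm xl, node yf ym yl => by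
      obtain ⟨z, hz⟩ := psum_nonempty xl (node yf ym yl)
      exact ⟨node xf xm z, (mem_psum_node_iff _ _ _ _ _ _ _).mpr (Or.inl ⟨z, hz, rfl⟩)⟩
  termination_by x y => sizeOf x + sizeOf y
  decreasing_by all_goals (simp_wf <;> omega)

end PT

open PT in
/-- the sum of groves of planar trees is associative, `{|}` is a
two-sided neutral element, and the sum of a grove of degree `n` and a grove of
degree `m` is a grove of degree `n + m`. -/
theorem pgrove_sum_monoid :
    (∀ A B C : Set PT, pgsum (pgsum A B) C = pgsum A (pgsum B C)) ∧
    (∀ n : ℕ, ∀ A : Set PT, PT.Grove n A →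
      pgsum {PT.leaf} A = A ∧ pgsum A {PT.leaf} = A) ∧
    (∀ n m : ℕ, ∀ A B : Set PT, PT.Grove n A → PT.Grove m B →
      PT.Grove (n + m) (pgsum A B)) := by

  have key : ∀ x y c t : PT, (∃ z, z ∈ psum x y ∧ t ∈ psum z c) ↔
      (∃ z, z ∈ psum y c ∧ t ∈ psum x z) := by
    intro x y c t
    rw [← mem_biUnion_iff, ← mem_biUnion_iff, psum_assoc]
  refine ⟨?_, ?_, ?_⟩
  · intro A B C
    ext t
    simp only [pgsum, Set.mem_iUnion, exists_prop]
    constructor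
    · rintro ⟨z, ⟨x, hx, y, hy, hz⟩, c, hc, ht⟩
      obtain ⟨w, hw, ht'⟩ := (key x y c t).mp ⟨z, hz, ht⟩
      exact ⟨x, hx, w, ⟨y, hy, c, hc, hw⟩, ht'⟩
    · rintro ⟨x, hx, w, ⟨y, hy, c, hc, hw⟩, ht⟩
      obtain ⟨z, hz, ht'⟩ := (key x y c t).mpr ⟨w, hw, ht⟩
      exact ⟨z, ⟨x, hx, y, hy, hz⟩, c, hc, ht'⟩
  · intro n A _
    constructor
    · ext t
      simp [pgsum, psum_leaf_left]
    · ext t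
      simp [pgsum, psum_leaf_right, eq_comm]
  · intro n m A B hA hB
    constructor
    · obtain ⟨a, ha⟩ := hA.1
      obtain ⟨b, hb⟩ := hB.1
      obtain ⟨z, hz⟩ := psum_nonempty a b
      refine ⟨z, ?_⟩
      simp only [pgsum, Set.mem_iUnion, exists_prop]
      exact ⟨a, ha, b, hb, hz⟩
    · intro x hx
      simp only [pgsum, Set.mem_iUnion, exists_prop] at hx
      obtain ⟨a, ha, b, hb, hab⟩ := hx
      have h1 := nleaves_psum a b x hab
      have h2 := hA.2 a ha
      have h3 := hB.2 b hb
      have p1 := nleaves_pos a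
      have p2 := nleaves_pos b
      have p3 := nleaves_pos x
      simp only [deg] at h2 h3 ⊢
      omega
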